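/- Let μ > 0 and let M be a real number with 0 ≤ M < μ. Then ∫_M^μ G_μ(t) dt ≤ ((μ−M)/4)·((4−3Θ)/(2−Θ))·G_μ(M), where Θ = Θ(M, μ, μ). -/

import Mathlib

/-- The function `g(x) = (1/π)(√(1−x²) − x·arccos x)`. -/
noncomputable def g (x : ℝ) : ℝ := (1 / Real.pi) * (Real.sqrt (1 - x ^ 2) - x * Real.arccos x)

/-- For `μ > 0`, `G_μ(x) = μ·g(x/μ)`. -/
noncomputable def G (μ x : ℝ) : ℝ := μ * g (x / μ)

/-- `Θ(i,j,μ) = (j−i)/(2μ·arccos(i/μ)·√(1−(i/μ)²))`. -/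
noncomputable def Θ (i j μ : ℝ) : ℝ :=
  (j - i) / (2 * μ * Real.arccos (i / μ) * Real.sqrt (1 - (i / μ) ^ 2))

/-!
On `[M, μ]` the second derivative of `G_μ`, namely `1 / (μπ√(1 - (t/μ)²))`, is at least its
value `K` at `M`, so `G_μ` lies below its chord minus the parabola `K/2 (t - M)(μ - t)`.
Integrating, and using `G_μ(μ) = 0`, gives
`∫ G_μ ≤ (μ - M) G_μ(M) / 2 - K (μ - M)³ / 12`. The bound `G_μ(M) ≤ (μ - M) arccos(M/μ) / π`
(i.e. `sin c ≤ c`) turns the curvature term into `(μ - M) G_μ(M) Θ / 6`, and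
`(3 - Θ)/6 ≤ (4 - 3Θ)/(4(2 - Θ))` holds because `Θ ≤ 1/2`, which is `1 - x ≤ arccos x · √(1 - x²)`.
-/

open Real Set

theorem integral_chord_sub_parabola {a b : ℝ} (hab : a ≠ b) (A B K : ℝ) :
    ∫ t in a..b, (((b - t) * A + (t - a) * B) / (b - a) - K / 2 * (t - a) * (b - t)) =
      (b - a) * (A + B) / 2 - K * (b - a) ^ 3 / 12 := by
  have hba : b - a ≠ 0 := sub_ne_zero.2 hab.symm
  have hF : ∀ t ∈ uIcc a b, HasDerivAt
      (fun t => (B * (t - a) ^ 2 - A * (b - t) ^ 2) / (2 * (b - a))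
        - K / 2 * ((b - a) * (t - a) ^ 2 / 2 - (t - a) ^ 3 / 3))
      (((b - t) * A + (t - a) * B) / (b - a) - K / 2 * (t - a) * (b - t)) t := by
    intro t _
    have hl := (hasDerivAt_id' t).sub_const a
    have hr := (hasDerivAt_id' t).const_sub b
    have chord := (((hl.fun_pow 2).const_mul B).sub ((hr.fun_pow 2).const_mul A)).div_const
      (2 * (b - a))
    have parabola := ((((hl.fun_pow 2).const_mul (b - a)).div_const 2).sub
      ((hl.fun_pow 3).div_const 3)).const_mul (K / 2)
    exact (chord.sub parabola).congr_deriv (by field_simp; ring)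
  rw [intervalIntegral.integral_eq_sub_of_hasDerivAt hF
    ((by fun_prop : Continuous _).intervalIntegrable a b)]
  field_simp
  ring

section CurvatureBound

variable {f f' f'' : ℝ → ℝ} {a b K : ℝ}

theorem convexOn_sub_mul_sq_of_le_deriv2 (hf : ContinuousOn f (Icc a b))
    (hf' : ∀ x ∈ Ioo a b, HasDerivAt f (f' x) x) (hf'' : ∀ x ∈ Ioo a b, HasDerivAt f' (f'' x) x)
    (hK : ∀ x ∈ Ioo a b, K ≤ f'' x) :
    ConvexOn ℝ (Icc a b) (fun x => f x - K / 2 * x ^ 2) := by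
  refine convexOn_of_hasDerivWithinAt2_nonneg (convex_Icc a b)
    (f' := fun x => f' x - K * x) (f'' := fun x => f'' x - K)
    (hf.sub (by fun_prop)) (fun x hx => ?_) (fun x hx => ?_) (fun x hx => ?_) <;>
    rw [interior_Icc] at hx
  · exact ((hf' x hx).sub ((hasDerivAt_pow 2 x).const_mul (K / 2))).hasDerivWithinAt.congr_deriv
      (by ring)
  · exact ((hf'' x hx).sub ((hasDerivAt_id' x).const_mul K)).hasDerivWithinAt.congr_deriv (by ring)
  · exact sub_nonneg.2 (hK x hx)

theorem le_chord_sub_parabola_of_le_deriv2 (hf : ContinuousOn f (Icc a b))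
    (hf' : ∀ x ∈ Ioo a b, HasDerivAt f (f' x) x) (hf'' : ∀ x ∈ Ioo a b, HasDerivAt f' (f'' x) x)
    (hK : ∀ x ∈ Ioo a b, K ≤ f'' x) {t : ℝ} (ht : t ∈ Ioo a b) :
    f t ≤ ((b - t) * f a + (t - a) * f b) / (b - a) - K / 2 * (t - a) * (b - t) := by
  have hab : a < b := ht.1.trans ht.2
  have secant := (convexOn_sub_mul_sq_of_le_deriv2 hf hf' hf'' hK).secant_mono_aux1
    (left_mem_Icc.2 hab.le) (right_mem_Icc.2 hab.le) ht.1 ht.2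
  have : f t + K / 2 * (t - a) * (b - t) ≤ ((b - t) * f a + (t - a) * f b) / (b - a) := by
    rw [le_div_iff₀ (sub_pos.2 hab)]
    linear_combination secant
  linarith

theorem integral_le_trapezoid_sub_of_le_deriv2 (hab : a < b) (hf : ContinuousOn f (Icc a b))
    (hf' : ∀ x ∈ Ioo a b, HasDerivAt f (f' x) x) (hf'' : ∀ x ∈ Ioo a b, HasDerivAt f' (f'' x) x)
    (hK : ∀ x ∈ Ioo a b, K ≤ f'' x) :
    ∫ t in a..b, f t ≤ (b - a) * (f a + f b) / 2 - K * (b - a) ^ 3 / 12 := by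
  rw [← integral_chord_sub_parabola hab.ne]
  exact intervalIntegral.integral_mono_on_of_le_Ioo hab.le (hf.intervalIntegrable_of_Icc hab.le)
    ((by fun_prop : Continuous _).intervalIntegrable a b)
    (fun t ht => le_chord_sub_parabola_of_le_deriv2 hf hf' hf'' hK ht)

end CurvatureBound

theorem sqrt_one_sub_sq_le_arccos (x : ℝ) : √(1 - x ^ 2) ≤ arccos x :=
  sin_arccos x ▸ sin_le (arccos_nonneg x)

theorem mul_arccos_le_sqrt_one_sub_sq (x : ℝ) : x * arccos x ≤ √(1 - x ^ 2) := by
  rcases le_or_gt x 0 with hx0 | hx0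
  · exact (mul_nonpos_of_nonpos_of_nonneg hx0 (arccos_nonneg x)).trans (sqrt_nonneg _)
  rcases le_or_gt 1 x with hx1 | hx1
  · simp [arccos_eq_zero.2 hx1]
  have htan := le_tan (arccos_nonneg x) (arccos_lt_pi_div_two.2 hx0)
  rw [tan_arccos, le_div_iff₀ hx0] at htan
  linarith

theorem one_sub_le_arccos_mul_sqrt {x : ℝ} (hx0 : 0 ≤ x) (hx1 : x ≤ 1) :
    1 - x ≤ arccos x * √(1 - x ^ 2) := by
  have hs : √(1 - x ^ 2) ^ 2 = 1 - x ^ 2 := sq_sqrt (by nlinarith)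
  nlinarith [mul_le_mul_of_nonneg_right (sqrt_one_sub_sq_le_arccos x) (sqrt_nonneg (1 - x ^ 2))]

theorem g_nonneg (x : ℝ) : 0 ≤ g x :=
  mul_nonneg (by positivity) (sub_nonneg.2 (mul_arccos_le_sqrt_one_sub_sq x))

theorem g_le (x : ℝ) : g x ≤ (1 - x) * arccos x / π := by
  rw [g, one_div_mul_eq_div]
  gcongr
  linarith [sqrt_one_sub_sq_le_arccos x]

theorem hasDerivAt_g {y : ℝ} (hy : y ∈ Ioo (-1) 1) : HasDerivAt g (-arccos y / π) y := by
  have hy2 : 0 < 1 - y ^ 2 := by nlinarith [hy.1, hy.2]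
  have hsqrt := ((hasDerivAt_pow 2 y).const_sub 1).sqrt hy2.ne'
  have harccos := (hasDerivAt_id' y).mul (hasDerivAt_arccos hy.1.ne' hy.2.ne)
  refine ((hsqrt.sub harccos).const_mul (1 / π)).congr_deriv ?_
  field_simp
  ring

theorem continuous_G (μ : ℝ) : Continuous (G μ) := by
  unfold G g
  fun_prop

theorem G_self {μ : ℝ} (hμ : μ ≠ 0) : G μ μ = 0 := by
  simp [G, g, div_self hμ]

theorem G_nonneg {μ : ℝ} (hμ : 0 ≤ μ) (x : ℝ) : 0 ≤ G μ x :=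
  mul_nonneg hμ (g_nonneg _)

theorem G_le {μ : ℝ} (hμ : 0 < μ) (x : ℝ) : G μ x ≤ (μ - x) * arccos (x / μ) / π := by
  calc G μ x ≤ μ * ((1 - x / μ) * arccos (x / μ) / π) := by
        unfold G; gcongr; exact g_le _
    _ = (μ - x) * arccos (x / μ) / π := by field_simp

section Derivatives

variable {μ t : ℝ}

theorem div_mem_Ioo_neg_one_one (hμ : 0 < μ) (ht : t ∈ Ioo (-μ) μ) : t / μ ∈ Ioo (-1) 1 :=
  ⟨by rw [lt_div_iff₀ hμ]; linarith [ht.1], (div_lt_one hμ).2 ht.2⟩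

theorem hasDerivAt_G (hμ : 0 < μ) (ht : t ∈ Ioo (-μ) μ) :
    HasDerivAt (G μ) (-arccos (t / μ) / π) t := by
  have := ((hasDerivAt_g (div_mem_Ioo_neg_one_one hμ ht)).comp t
    ((hasDerivAt_id' t).div_const μ)).const_mul μ
  exact this.congr_deriv (by field_simp)

theorem hasDerivAt_neg_arccos_div (hμ : 0 < μ) (ht : t ∈ Ioo (-μ) μ) :
    HasDerivAt (fun x => -arccos (x / μ) / π) (1 / (μ * π * √(1 - (t / μ) ^ 2))) t := by
  have hy := div_mem_Ioo_neg_one_one hμ ht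
  have := ((hasDerivAt_arccos hy.1.ne' hy.2.ne).comp t
    ((hasDerivAt_id' t).div_const μ)).neg.div_const π
  exact this.congr_deriv (by field_simp)

end Derivatives

section Estimates

variable {μ M : ℝ}

theorem integral_G_le (hμ : 0 < μ) (hM0 : 0 ≤ M) (hM : M < μ) :
    ∫ t in M..μ, G μ t ≤
      (μ - M) * G μ M / 2 - 1 / (μ * π * √(1 - (M / μ) ^ 2)) * (μ - M) ^ 3 / 12 := by
  have hIoo : ∀ x ∈ Ioo M μ, x ∈ Ioo (-μ) μ := fun x hx => ⟨by linarith [hx.1], hx.2⟩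
  have hK : ∀ x ∈ Ioo M μ,
      1 / (μ * π * √(1 - (M / μ) ^ 2)) ≤ 1 / (μ * π * √(1 - (x / μ) ^ 2)) := by
    intro x hx
    have hy := div_mem_Ioo_neg_one_one hμ (hIoo x hx)
    have : 0 < 1 - (x / μ) ^ 2 := by nlinarith [hy.1, hy.2]
    gcongr
    exact hx.1.le
  have := integral_le_trapezoid_sub_of_le_deriv2 hM (continuous_G μ).continuousOn
    (fun x hx => hasDerivAt_G hμ (hIoo x hx))
    (fun x hx => hasDerivAt_neg_arccos_div hμ (hIoo x hx)) hK
  rwa [G_self hμ.ne', add_zero] at this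

theorem Θ_nonneg (hμ : 0 ≤ μ) (hM : M ≤ μ) : 0 ≤ Θ M μ μ :=
  div_nonneg (sub_nonneg.2 hM) (by have := arccos_nonneg (M / μ); positivity)

theorem Θ_le_half (hμ : 0 < μ) (hM0 : 0 ≤ M) (hM : M < μ) : Θ M μ μ ≤ 1 / 2 := by
  have hm0 : 0 ≤ M / μ := div_nonneg hM0 hμ.le
  have hm1 : M / μ < 1 := (div_lt_one hμ).2 hM
  have hc : 0 < arccos (M / μ) := arccos_pos.2 hm1
  have hs : 0 < √(1 - (M / μ) ^ 2) := sqrt_pos.2 (by nlinarith)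
  have key := mul_le_mul_of_nonneg_left (one_sub_le_arccos_mul_sqrt hm0 hm1.le) hμ.le
  rw [mul_one_sub, mul_div_cancel₀ _ hμ.ne'] at key
  rw [Θ, div_le_iff₀ (by positivity)]
  linarith

theorem mul_G_mul_Θ_le (hμ : 0 < μ) (hM0 : 0 ≤ M) (hM : M < μ) :
    (μ - M) * G μ M * Θ M μ μ / 6 ≤ 1 / (μ * π * √(1 - (M / μ) ^ 2)) * (μ - M) ^ 3 / 12 := by
  have hm1 : M / μ < 1 := (div_lt_one hμ).2 hM
  have hc : 0 < arccos (M / μ) := arccos_pos.2 hm1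
  have hs : 0 < √(1 - (M / μ) ^ 2) := sqrt_pos.2 (by nlinarith [div_nonneg hM0 hμ.le])
  have hδ : 0 ≤ μ - M := by linarith
  calc (μ - M) * G μ M * Θ M μ μ / 6
      ≤ (μ - M) * ((μ - M) * arccos (M / μ) / π) * Θ M μ μ / 6 := by
        gcongr
        · exact Θ_nonneg hμ.le hM.le
        · exact G_le hμ M
    _ = 1 / (μ * π * √(1 - (M / μ) ^ 2)) * (μ - M) ^ 3 / 12 := by
        rw [Θ]
        field_simp
        ring

end Estimates

/-- Lemma 2.5: for `0 ≤ M < μ`,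
`∫_M^μ G_μ(t) dt ≤ ((μ−M)/4)·((4−3Θ)/(2−Θ))·G_μ(M)` with `Θ = Θ(M,μ,μ)`. -/
theorem stmt3 (μ M : ℝ) (hμ : 0 < μ) (hM0 : 0 ≤ M) (hM : M < μ) :
    (∫ t in M..μ, G μ t) ≤
      (μ - M) / 4 * ((4 - 3 * Θ M μ μ) / (2 - Θ M μ μ)) * G μ M := by
  have hΘ0 := Θ_nonneg hμ.le hM.le
  have hΘ := Θ_le_half hμ hM0 hM
  have hfactor : (3 - Θ M μ μ) * 2 / 3 ≤ (4 - 3 * Θ M μ μ) / (2 - Θ M μ μ) := by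
    rw [le_div_iff₀ (by linarith)]
    nlinarith
  calc ∫ t in M..μ, G μ t
      ≤ (μ - M) * G μ M / 2 - 1 / (μ * π * √(1 - (M / μ) ^ 2)) * (μ - M) ^ 3 / 12 :=
        integral_G_le hμ hM0 hM
    _ ≤ (μ - M) * G μ M / 2 - (μ - M) * G μ M * Θ M μ μ / 6 := by
        linarith [mul_G_mul_Θ_le hμ hM0 hM]
    _ = (μ - M) / 4 * ((3 - Θ M μ μ) * 2 / 3) * G μ M := by ring
    _ ≤ (μ - M) / 4 * ((4 - 3 * Θ M μ μ) / (2 - Θ M μ μ)) * G μ M := by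
        have := G_nonneg hμ.le M
        gcongr
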